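/- Let (X, Y) ∈ ℝ² be a random vector with X and Y nondegenerate and Pr{sup_{n≥1} Σ_{i=1}^n X_i = ∞} = 1 for i.i.d. copies X_i of X. Then: (3) h is convex on 𝓐 = {t ∈ ℝ : h(t) < ∞} and h(0) = 0; (4) 𝓐 is an interval containing 0, and for any t ∈ 𝓐, if the interior of 𝓓_t is nonempty, then the interior of 𝓓_s is nonempty for all s in the interior of 𝓐. -/

import Mathlib

open MeasureTheory ProbabilityTheory Real Set Filter Asymptotics
open scoped ENNReal

noncomputable section

/-- `N(x)`: the largest `n` such that all partial sums `X_1 + ⋯ + X_k`, `k ≤ n`, are `≤ x`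
(interpreted via `sSup`; it equals `0` if `X_1 > x`). -/
def NN {Ω : Type} (Xn : ℕ → Ω → ℝ) (x : ℝ) (ω : Ω) : ℕ :=
  sSup {n : ℕ | ∀ k ≤ n, ∑ i ∈ Finset.range k, Xn i ω ≤ x}

/-- `W(x) = Y_1 + ⋯ + Y_{N(x)}`, the renewal reward process. -/
def WW {Ω : Type} (Xn Yn : ℕ → Ω → ℝ) (x : ℝ) (ω : Ω) : ℝ :=
  ∑ i ∈ Finset.range (NN Xn x ω), Yn i ω

/-- `M_x(t) = E[e^{t W(x)}]`, as an extended-real valued integral. -/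
def MgfW {Ω : Type} [MeasurableSpace Ω] (P : Measure Ω) (Xn Yn : ℕ → Ω → ℝ) (x t : ℝ) : ℝ≥0∞ :=
  ∫⁻ ω, ENNReal.ofReal (Real.exp (t * WW Xn Yn x ω)) ∂P

/-- `𝓓_t = {s : E[e^{tY - sX}] ≤ 1}`. -/
def Dset {Ω : Type} [MeasurableSpace Ω] (P : Measure Ω) (X Y : Ω → ℝ) (t : ℝ) : Set ℝ :=
  {s : ℝ | ∫⁻ ω, ENNReal.ofReal (Real.exp (t * Y ω - s * X ω)) ∂P ≤ 1}

/-- `h(t) = inf 𝓓_t`. -/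
def hfun {Ω : Type} [MeasurableSpace Ω] (P : Measure Ω) (X Y : Ω → ℝ) (t : ℝ) : ℝ :=
  sInf (Dset P X Y t)

/-- `h*(ν) = sup_t (νt - h(t))`, the convex conjugate of `h`. -/
def hstar {Ω : Type} [MeasurableSpace Ω] (P : Measure Ω) (X Y : Ω → ℝ) (ν : ℝ) : ℝ :=
  ⨆ t : ℝ, (ν * t - hfun P X Y t)

/-- `β_X = limsup_{x → ∞} (1/x) log Pr{X > x}`, as an extended real number. -/
def betaX {Ω : Type} [MeasurableSpace Ω] (P : Measure Ω) (X : Ω → ℝ) : EReal :=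
  Filter.limsup (fun x : ℝ => ((Real.log (P {ω | x < X ω}).toReal / x : ℝ) : EReal)) Filter.atTop

/-- The (topological) support of a measure on `ℝ`. -/
def msupport (μ : Measure ℝ) : Set ℝ := {x | ∀ U ∈ nhds x, 0 < μ U}

/-- `B(X,t)` of the paper. -/
def Bfun {Ω : Type} [MeasurableSpace Ω] (P : Measure Ω) (X Y : Ω → ℝ)
    (Xn Yn : ℕ → Ω → ℝ) (g : ℝ → ℝ → ℝ) (t : ℝ) : ℝ :=
  (∫ x in Set.Ioi (0:ℝ), Real.exp (-(hfun P X Y t) * x) * (P {ω | x < X ω}).toReal) -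
  (∫ x in Set.Iio (0:ℝ),
      (∫ u in Set.Ioo (0:ℝ) |x|,
        g t x * (MgfW P Xn Yn u t).toReal * Real.exp (-(hfun P X Y t) * (x + u)))
    ∂(Measure.map X P))

/-- `φ(t) = B(X,t) / E[X e^{tY - h(t)X}]` of the paper. -/
def phifun {Ω : Type} [MeasurableSpace Ω] (P : Measure Ω) (X Y : Ω → ℝ)
    (Xn Yn : ℕ → Ω → ℝ) (g : ℝ → ℝ → ℝ) (t : ℝ) : ℝ :=
  Bfun P X Y Xn Yn g t / ∫ ω, X ω * Real.exp (t * Y ω - hfun P X Y t * X ω) ∂P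

/-!
Hölder's inequality makes the region `{(t, s) : E[e^{tY - sX}] ≤ 1}` convex, and every statement
except `h(0) = 0` is a fact about a convex planar set whose vertical fibres `𝓓_t` are bounded
below: its shadow `𝓐` is an interval, the lower boundary `h` is convex, and convex combination
with a fixed point of the set transports interior points between fibres. The fibres are bounded
below because `P(X > 0) > 0`, which `sup_n S_n = ∞` forces.

For `h(0) = 0` it remains to exclude `s < 0` from `𝓓_0`: otherwise `E[e^{-sX}] ≤ 1` and
`P(X > 0) > 0` give `ρ = E[e^{-sX/2}] < 1`, so `P(S_n > 0) ≤ ρ^n` by Chernoff and independence;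
by Borel–Cantelli the partial sums are eventually nonpositive, contradicting `sup_n S_n = ∞`.
-/

open Topology

section ConvexGraph

variable {D : ℝ → Set ℝ}

lemma Convex.mul_add_mul_mem_fiber (hD : Convex ℝ {p : ℝ × ℝ | p.2 ∈ D p.1})
    {t₁ t₂ s₁ s₂ a b : ℝ} (h₁ : s₁ ∈ D t₁) (h₂ : s₂ ∈ D t₂) (ha : 0 ≤ a) (hb : 0 ≤ b)
    (hab : a + b = 1) : a * s₁ + b * s₂ ∈ D (a * t₁ + b * t₂) :=
  hD (x := (t₁, s₁)) h₁ (y := (t₂, s₂)) h₂ ha hb hab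

lemma Convex.setOf_fiber_nonempty (hD : Convex ℝ {p : ℝ × ℝ | p.2 ∈ D p.1}) :
    Convex ℝ {t | (D t).Nonempty} := by
  rintro t₁ ⟨s₁, h₁⟩ t₂ ⟨s₂, h₂⟩ a b ha hb hab
  exact ⟨_, hD.mul_add_mul_mem_fiber h₁ h₂ ha hb hab⟩

lemma Convex.convexOn_sInf_fiber (hD : Convex ℝ {p : ℝ × ℝ | p.2 ∈ D p.1})
    (hbdd : ∀ t, BddBelow (D t)) :
    ConvexOn ℝ {t | (D t).Nonempty} (fun t => sInf (D t)) := by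
  refine ⟨hD.setOf_fiber_nonempty, fun t₁ h₁ t₂ h₂ a b ha hb hab => ?_⟩
  simp only [smul_eq_mul]
  refine le_of_forall_pos_le_add fun ε hε => ?_
  obtain ⟨s₁, hs₁, hlt₁⟩ := exists_lt_of_csInf_lt h₁ (lt_add_of_pos_right (sInf (D t₁)) hε)
  obtain ⟨s₂, hs₂, hlt₂⟩ := exists_lt_of_csInf_lt h₂ (lt_add_of_pos_right (sInf (D t₂)) hε)
  calc sInf (D (a * t₁ + b * t₂))
      ≤ a * s₁ + b * s₂ := csInf_le (hbdd _) (hD.mul_add_mul_mem_fiber hs₁ hs₂ ha hb hab)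
    _ ≤ a * (sInf (D t₁) + ε) + b * (sInf (D t₂) + ε) := by gcongr
    _ = a * sInf (D t₁) + b * sInf (D t₂) + ε := by linear_combination ε * hab

/-- Writing `s = λ t + (1 - λ) r` with `r` in the domain beyond `s`, the affine map
`σ ↦ λ σ + (1 - λ) v` (for some `v ∈ D r`) is a homeomorphism carrying `D t` into `D s`. -/
lemma Convex.interior_fiber_nonempty (hD : Convex ℝ {p : ℝ × ℝ | p.2 ∈ D p.1}) {t s : ℝ}
    (ht : (interior (D t)).Nonempty) (hs : s ∈ interior {t | (D t).Nonempty}) :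
    (interior (D s)).Nonempty := by
  obtain ⟨δ, ⟨v, hv⟩, hδ⟩ : ∃ δ : ℝ, (D (s + δ * (s - t))).Nonempty ∧ 0 < δ := by
    have hlim : Tendsto (fun δ : ℝ => s + δ * (s - t)) (𝓝[>] 0) (𝓝 s) :=
      ((by fun_prop : Continuous fun δ : ℝ => s + δ * (s - t)).tendsto' 0 s
        (by simp)).mono_left nhdsWithin_le_nhds
    exact ((hlim.eventually (mem_interior_iff_mem_nhds.1 hs)).and self_mem_nhdsWithin).exists
  set lam : ℝ := δ / (1 + δ)
  have hlam : 0 < lam := by positivity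
  have hlam₁ : 0 ≤ 1 - lam := by
    rw [sub_nonneg, div_le_one (by positivity)]
    linarith
  have hcomb : lam * t + (1 - lam) * (s + δ * (s - t)) = s := by
    simp only [lam]
    field_simp
    ring
  let f : ℝ ≃ₜ ℝ := (Homeomorph.mulLeft₀ lam hlam.ne').trans (Homeomorph.addRight ((1 - lam) * v))
  have hf : f '' D t ⊆ D s := by
    rintro _ ⟨u, hu, rfl⟩
    simpa [hcomb, f] using hD.mul_add_mul_mem_fiber hu hv hlam.le hlam₁ (add_sub_cancel lam 1)
  obtain ⟨u, hu⟩ := ht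
  exact ⟨f u, interior_mono hf (f.image_interior (D t) ▸ mem_image_of_mem f hu)⟩

end ConvexGraph

lemma frequently_pos_of_forall_exists_lt {u : ℕ → ℝ} (h : ∀ M, ∃ n, M < u n) :
    ∃ᶠ n in atTop, 0 < u n := by
  by_contra hfreq
  obtain ⟨M, hM⟩ := (isBoundedUnder_of_eventually_le
    ((not_frequently.1 hfreq).mono fun n hn => not_lt.1 hn)).bddAbove_range
  obtain ⟨n, hn⟩ := h M
  exact hn.not_ge (hM (mem_range_self n))

section Probability

variable {Ω : Type} [MeasurableSpace Ω] {μ : Measure Ω}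

lemma lintegral_exp_mul_add_mul_le {f g : Ω → ℝ} (hf : AEMeasurable f μ) (hg : AEMeasurable g μ)
    {a b : ℝ} (ha : 0 ≤ a) (hb : 0 ≤ b) (hab : a + b = 1) :
    ∫⁻ ω, ENNReal.ofReal (exp (a * f ω + b * g ω)) ∂μ ≤
      (∫⁻ ω, ENNReal.ofReal (exp (f ω)) ∂μ) ^ a * (∫⁻ ω, ENNReal.ofReal (exp (g ω)) ∂μ) ^ b := by
  refine le_of_eq_of_le (lintegral_congr fun ω => ?_)
    (ENNReal.lintegral_mul_norm_pow_le (by fun_prop) (by fun_prop) ha hb hab)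
  rw [ENNReal.ofReal_rpow_of_pos (exp_pos _), ENNReal.ofReal_rpow_of_pos (exp_pos _),
    ← ENNReal.ofReal_mul (by positivity), ← exp_mul, ← exp_mul, ← exp_add, mul_comm a, mul_comm b]

lemma exists_measure_pos_lt_and_lt {f g : Ω → ℝ} (h : 0 < μ {ω | 0 < f ω}) :
    ∃ c > 0, ∃ m, 0 < μ {ω | c < f ω ∧ m < g ω} := by
  by_contra! hnull
  refine h.ne' (measure_mono_null (fun ω (hω : 0 < f ω) => ?_) (measure_iUnion_null
    fun n : ℕ => nonpos_iff_eq_zero.1 (hnull (1 / (n + 1)) (by positivity) (-n))))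
  obtain ⟨n, hn⟩ := exists_nat_gt (max (1 / f ω) (-g ω))
  rw [max_lt_iff] at hn
  exact mem_iUnion.2 ⟨n, (one_div_lt (by positivity) hω).2 (by linarith), by linarith⟩

lemma lintegral_exp_half_mul_lt_one [IsProbabilityMeasure μ] {X : Ω → ℝ}
    (hX : AEMeasurable X μ) (hpos : 0 < μ {ω | 0 < X ω}) {a : ℝ} (ha : 0 < a)
    (h : ∫⁻ ω, ENNReal.ofReal (exp (a * X ω)) ∂μ ≤ 1) :
    ∫⁻ ω, ENNReal.ofReal (exp (a / 2 * X ω)) ∂μ < 1 := by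
  set g : Ω → ℝ≥0∞ := fun ω => ENNReal.ofReal ((1 + exp (a * X ω)) / 2)
  -- AM-GM: `e^{ax/2} ≤ (1 + e^{ax}) / 2`, strictly unless `x = 0`
  have hamgm : ∀ ω, ENNReal.ofReal (exp (a / 2 * X ω)) ≤ g ω ∧
      (0 < X ω → ENNReal.ofReal (exp (a / 2 * X ω)) < g ω) := by
    intro ω
    have hsq : exp (a * X ω) = exp (a / 2 * X ω) ^ 2 := by rw [← exp_nat_mul]; ring_nf
    refine ⟨ENNReal.ofReal_le_ofReal ?_, fun hω => ?_⟩
    · nlinarith [sq_nonneg (exp (a / 2 * X ω) - 1)]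
    · have h1 : 1 < exp (a / 2 * X ω) := one_lt_exp_iff.2 (by positivity)
      exact (ENNReal.ofReal_lt_ofReal_iff (by positivity)).2 (by nlinarith)
  have hg_eq : ∀ ω, g ω = 2⁻¹ * (1 + ENNReal.ofReal (exp (a * X ω))) := fun ω => by
    simp only [g]
    rw [ENNReal.ofReal_div_of_pos two_pos, ENNReal.ofReal_add zero_le_one (exp_pos _).le,
      ENNReal.ofReal_one, ENNReal.ofReal_ofNat, ENNReal.div_eq_inv_mul]
  have hg : ∫⁻ ω, g ω ∂μ ≤ 1 := calc
    ∫⁻ ω, g ω ∂μ = 2⁻¹ * (1 + ∫⁻ ω, ENNReal.ofReal (exp (a * X ω)) ∂μ) := by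
      rw [lintegral_congr hg_eq, lintegral_const_mul' _ _ (by simp),
        lintegral_add_left measurable_const, lintegral_const, measure_univ, one_mul]
    _ ≤ 2⁻¹ * (1 + 1) := by gcongr
    _ = 1 := by rw [one_add_one_eq_two, ENNReal.inv_mul_cancel two_ne_zero ENNReal.ofNat_ne_top]
  have hfin : ∫⁻ ω, ENNReal.ofReal (exp (a / 2 * X ω)) ∂μ ≠ ⊤ :=
    ne_top_of_le_ne_top ENNReal.one_ne_top ((lintegral_mono fun ω => (hamgm ω).1).trans hg)
  exact (lintegral_strict_mono_of_ae_le_of_ae_lt_on (by fun_prop) hfin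
    (.of_forall fun ω => (hamgm ω).1) hpos.ne' (.of_forall fun ω => (hamgm ω).2)).trans_le hg

lemma measure_pos_of_forall_exists_lt_sum {X : Ω → ℝ} {Xn : ℕ → Ω → ℝ}
    (hident : ∀ n, IdentDistrib (Xn n) X μ μ)
    (hsup : μ {ω | ∀ M : ℝ, ∃ n, M < ∑ i ∈ Finset.range n, Xn i ω} ≠ 0) :
    0 < μ {ω | 0 < X ω} := by
  refine pos_iff_ne_zero.2 fun h0 => hsup (measure_mono_null (fun ω hω => ?_)
    (measure_iUnion_null fun n => ((hident n).measure_mem_eq measurableSet_Ioi).trans h0))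
  obtain ⟨n, hn⟩ := hω 0
  by_contra hnot
  simp only [mem_iUnion, mem_preimage, mem_Ioi, not_exists, not_lt] at hnot
  exact hn.not_ge (Finset.sum_nonpos fun i _ => hnot i)

lemma lintegral_exp_mul_sum_eq_pow {X : Ω → ℝ} {Xn : ℕ → Ω → ℝ} (hXn : ∀ n, Measurable (Xn n))
    (hident : ∀ n, IdentDistrib (Xn n) X μ μ) (hindep : iIndepFun Xn μ) (b : ℝ) (n : ℕ) :
    ∫⁻ ω, ENNReal.ofReal (exp (b * ∑ i ∈ Finset.range n, Xn i ω)) ∂μ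
      = (∫⁻ ω, ENNReal.ofReal (exp (b * X ω)) ∂μ) ^ n := by
  have hφ : Measurable fun x : ℝ => ENNReal.ofReal (exp (b * x)) := by fun_prop
  calc ∫⁻ ω, ENNReal.ofReal (exp (b * ∑ i ∈ Finset.range n, Xn i ω)) ∂μ
      = ∫⁻ ω, ∏ i ∈ Finset.range n, ENNReal.ofReal (exp (b * Xn i ω)) ∂μ := by
        simp_rw [Finset.mul_sum, exp_sum, ENNReal.ofReal_prod_of_nonneg fun i _ => (exp_pos _).le]
    _ = ∏ i ∈ Finset.range n, ∫⁻ ω, ENNReal.ofReal (exp (b * Xn i ω)) ∂μ :=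
        lintegral_prod_eq_prod_lintegral_of_indepFun _ _ (hindep.comp _ fun _ => hφ)
          fun i => hφ.comp (hXn i)
    _ = _ := by
        refine (Finset.prod_eq_pow_card fun i _ => ?_).trans (by rw [Finset.card_range])
        exact ((hident i).comp hφ).lintegral_eq

lemma nonneg_of_lintegral_exp_neg_mul_le_one {X : Ω → ℝ} {Xn : ℕ → Ω → ℝ}
    (hXn : ∀ n, Measurable (Xn n)) (hident : ∀ n, IdentDistrib (Xn n) X μ μ)
    (hindep : iIndepFun Xn μ)
    (hsup : μ {ω | ∀ M : ℝ, ∃ n, M < ∑ i ∈ Finset.range n, Xn i ω} ≠ 0)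
    {s : ℝ} (hs : ∫⁻ ω, ENNReal.ofReal (exp (-(s * X ω))) ∂μ ≤ 1) : 0 ≤ s := by
  have := hindep.isProbabilityMeasure
  by_contra! hneg
  set ρ := ∫⁻ ω, ENNReal.ofReal (exp (-s / 2 * X ω)) ∂μ
  have hρ : ρ < 1 := lintegral_exp_half_mul_lt_one (hident 0).aemeasurable_snd
    (measure_pos_of_forall_exists_lt_sum hident hsup) (neg_pos.2 hneg) (by simpa using hs)
  have hchernoff : ∀ n, μ {ω | 0 < ∑ i ∈ Finset.range n, Xn i ω} ≤ ρ ^ n := fun n => calc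
    μ {ω | 0 < ∑ i ∈ Finset.range n, Xn i ω}
        ≤ μ {ω | 1 ≤ ENNReal.ofReal (exp (-s / 2 * ∑ i ∈ Finset.range n, Xn i ω))} :=
          measure_mono fun ω (hω : 0 < ∑ i ∈ Finset.range n, Xn i ω) => by
            simpa using mul_nonneg (by linarith) hω.le
    _ ≤ ∫⁻ ω, ENNReal.ofReal (exp (-s / 2 * ∑ i ∈ Finset.range n, Xn i ω)) ∂μ := by
          simpa using mul_meas_ge_le_lintegral₀ (μ := μ)
            (f := fun ω => ENNReal.ofReal (exp (-s / 2 * ∑ i ∈ Finset.range n, Xn i ω)))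
            (by fun_prop) 1
    _ = ρ ^ n := lintegral_exp_mul_sum_eq_pow hXn hident hindep _ n
  have hsum : ∑' n, μ {ω | 0 < ∑ i ∈ Finset.range n, Xn i ω} ≠ ⊤ :=
    ne_top_of_le_ne_top (by simpa [ENNReal.tsum_geometric, tsub_eq_zero_iff_le] using hρ)
      (ENNReal.tsum_le_tsum hchernoff)
  exact hsup (measure_mono_null (fun ω hω => frequently_pos_of_forall_exists_lt hω)
    (measure_setOfPred_frequently_eq_zero hsum))

lemma convex_graph_Dset {X Y : Ω → ℝ} (hX : AEMeasurable X μ) (hY : AEMeasurable Y μ) :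
    Convex ℝ {p : ℝ × ℝ | p.2 ∈ Dset μ X Y p.1} := by
  rintro ⟨t₁, s₁⟩ h₁ ⟨t₂, s₂⟩ h₂ a b ha hb hab
  show ∫⁻ ω, ENNReal.ofReal (exp ((a * t₁ + b * t₂) * Y ω - (a * s₁ + b * s₂) * X ω)) ∂μ ≤ 1
  calc ∫⁻ ω, ENNReal.ofReal (exp ((a * t₁ + b * t₂) * Y ω - (a * s₁ + b * s₂) * X ω)) ∂μ
      = ∫⁻ ω, ENNReal.ofReal (exp (a * (t₁ * Y ω - s₁ * X ω) + b * (t₂ * Y ω - s₂ * X ω))) ∂μ := by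
        simp only [mul_sub, add_mul, mul_assoc, sub_add_sub_comm]
    _ ≤ (∫⁻ ω, ENNReal.ofReal (exp (t₁ * Y ω - s₁ * X ω)) ∂μ) ^ a *
          (∫⁻ ω, ENNReal.ofReal (exp (t₂ * Y ω - s₂ * X ω)) ∂μ) ^ b :=
        lintegral_exp_mul_add_mul_le (by fun_prop) (by fun_prop) ha hb hab
    _ ≤ 1 ^ a * 1 ^ b := by gcongr <;> assumption
    _ = 1 := by simp

lemma zero_mem_Dset_zero [IsProbabilityMeasure μ] (X Y : Ω → ℝ) : (0 : ℝ) ∈ Dset μ X Y 0 := by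
  simp [Dset]

/-- On a set `{X > c, tY > m}` of positive probability (`c > 0`) the integrand is at least
`e^{m - sc}`, which is unbounded as `s → -∞`. -/
lemma bddBelow_Dset {X Y : Ω → ℝ} (hX : AEMeasurable X μ) (hY : AEMeasurable Y μ)
    (hpos : 0 < μ {ω | 0 < X ω}) (t : ℝ) : BddBelow (Dset μ X Y t) := by
  obtain ⟨c, hc, m, hA⟩ := exists_measure_pos_lt_and_lt (g := fun ω => t * Y ω) hpos
  obtain ⟨N, hN⟩ := ENNReal.exists_nat_mul_gt hA.ne' ENNReal.one_ne_top
  refine ⟨min 0 ((m - N) / c), fun s hs => le_of_not_gt fun hlt => ?_⟩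
  have hs₀ : s < 0 := hlt.trans_le (min_le_left _ _)
  have hsc : s * c < m - N := (lt_div_iff₀ hc).1 (hlt.trans_le (min_le_right _ _))
  have hsub : {ω | c < X ω ∧ m < t * Y ω} ⊆
      {ω | (N : ℝ≥0∞) ≤ ENNReal.ofReal (exp (t * Y ω - s * X ω))} := by
    rintro ω ⟨hXω, hYω⟩
    rw [mem_ofPred_eq, ← ENNReal.ofReal_natCast]
    refine ENNReal.ofReal_le_ofReal ((add_one_le_exp _).trans' ?_)
    nlinarith
  have hmarkov := (mul_le_mul_right (measure_mono hsub) (N : ℝ≥0∞)).trans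
    (mul_meas_ge_le_lintegral₀ (by fun_prop) _)
  exact (hN.trans_le (hmarkov.trans (show _ ≤ 1 from hs))).false

end Probability

/-- `𝓐 = {t : h(t) < ∞}` appears as `{t : 𝓓_t ≠ ∅}`, since Lean's `sInf ∅` is `0`, not `∞`. -/
theorem hfun_convexity_properties_general
    {Ω : Type} [MeasurableSpace Ω] (P : Measure Ω) [IsProbabilityMeasure P]
    (X Y : Ω → ℝ) (Xn Yn : ℕ → Ω → ℝ)
    (hX : Measurable X) (hY : Measurable Y)
    (hXn : ∀ n, Measurable (Xn n)) (hYn : ∀ n, Measurable (Yn n))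
    (hiid : ∀ n, Measure.map (fun ω => (Xn n ω, Yn n ω)) P = Measure.map (fun ω => (X ω, Y ω)) P)
    (hindep : iIndepFun (fun n ω => (Xn n ω, Yn n ω)) P)
    (hsup : P {ω | ∀ M : ℝ, ∃ n, M < ∑ i ∈ Finset.range n, Xn i ω} = 1)
    :
    -- (3): `h` is convex on `𝓐` and `h(0) = 0`
    ConvexOn ℝ {t : ℝ | (Dset P X Y t).Nonempty} (hfun P X Y) ∧
    hfun P X Y 0 = 0 ∧
    -- (4): `𝓐` is an interval containing `0`, and nonemptiness of `𝓓_t°` propagates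
    {t : ℝ | (Dset P X Y t).Nonempty}.OrdConnected ∧
    (0 : ℝ) ∈ {t : ℝ | (Dset P X Y t).Nonempty} ∧
    (∀ t ∈ {t : ℝ | (Dset P X Y t).Nonempty}, (interior (Dset P X Y t)).Nonempty →
      ∀ s ∈ interior {t : ℝ | (Dset P X Y t).Nonempty}, (interior (Dset P X Y s)).Nonempty) := by
  have hident : ∀ n, IdentDistrib (Xn n) X P P := fun n =>
    (IdentDistrib.mk ((hXn n).prodMk (hYn n)).aemeasurable (hX.prodMk hY).aemeasurable
      (hiid n)).comp measurable_fst
  have hindepX : iIndepFun Xn P := hindep.comp (fun _ => Prod.fst) fun _ => measurable_fst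
  have hsup' : P {ω | ∀ M : ℝ, ∃ n, M < ∑ i ∈ Finset.range n, Xn i ω} ≠ 0 := by simp [hsup]
  have hconv : Convex ℝ {p : ℝ × ℝ | p.2 ∈ Dset P X Y p.1} :=
    convex_graph_Dset hX.aemeasurable hY.aemeasurable
  have hbdd : ∀ t, BddBelow (Dset P X Y t) := bddBelow_Dset hX.aemeasurable hY.aemeasurable
    (measure_pos_of_forall_exists_lt_sum hident hsup')
  have hzero : (0 : ℝ) ∈ Dset P X Y 0 := zero_mem_Dset_zero X Y
  refine ⟨hconv.convexOn_sInf_fiber hbdd, ?_, hconv.setOf_fiber_nonempty.ordConnected,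
    ⟨0, hzero⟩, fun t _ ht s hs => hconv.interior_fiber_nonempty ht hs⟩
  refine le_antisymm (csInf_le (hbdd 0) hzero) (le_csInf ⟨0, hzero⟩ fun s hs => ?_)
  exact nonneg_of_lintegral_exp_neg_mul_le_one hXn hident hindepX hsup' (by simpa [Dset] using hs)

/-- Lemma 6.1, parts (3) and (4), where `𝓐 = {t : h(t) < ∞} = {t : 𝓓_t ≠ ∅}`. -/
theorem hfun_convexity_properties
    {Ω : Type} [MeasurableSpace Ω] (P : Measure Ω) [IsProbabilityMeasure P]
    (X Y : Ω → ℝ) (Xn Yn : ℕ → Ω → ℝ)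
    (hX : Measurable X) (hY : Measurable Y)
    (hXn : ∀ n, Measurable (Xn n)) (hYn : ∀ n, Measurable (Yn n))
    (hiid : ∀ n, Measure.map (fun ω => (Xn n ω, Yn n ω)) P = Measure.map (fun ω => (X ω, Y ω)) P)
    (hindep : iIndepFun (fun n ω => (Xn n ω, Yn n ω)) P)
    (hXnondeg : ¬ ∃ c : ℝ, P {ω | X ω = c} = 1)
    (hYnondeg : ¬ ∃ c : ℝ, P {ω | Y ω = c} = 1)
    (hsup : P {ω | ∀ M : ℝ, ∃ n, M < ∑ i ∈ Finset.range n, Xn i ω} = 1)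
    :
    -- (3): `h` is convex on `𝓐` and `h(0) = 0`
    ConvexOn ℝ {t : ℝ | (Dset P X Y t).Nonempty} (hfun P X Y) ∧
    hfun P X Y 0 = 0 ∧
    -- (4): `𝓐` is an interval containing `0`, and nonemptiness of `𝓓_t°` propagates
    {t : ℝ | (Dset P X Y t).Nonempty}.OrdConnected ∧
    (0 : ℝ) ∈ {t : ℝ | (Dset P X Y t).Nonempty} ∧
    (∀ t ∈ {t : ℝ | (Dset P X Y t).Nonempty}, (interior (Dset P X Y t)).Nonempty →
      ∀ s ∈ interior {t : ℝ | (Dset P X Y t).Nonempty}, (interior (Dset P X Y s)).Nonempty) :=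
  hfun_convexity_properties_general P X Y Xn Yn hX hY hXn hYn hiid hindep hsup
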